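/- arXiv:math/0108175 — 3 statements merged into one kernel-verified Lean document; each statement's English description precedes it below -/
import Mathlib

section
/- An R-module M is prime (i.e., ann(N) = ann(M) for every nonzero submodule N ≤ M) if and only if for every nonzero submodule N ≤ M, M embeds into a quotient of a submodule of a direct product of copies of N. -/
universe u

/-- An `R`-module `M` is prime (`ann(N) = ann(M)` for every nonzero submodule `N ≤ M`)
if and only if for every nonzero submodule `N ≤ M`, the module `M` embeds into a quotient
of a submodule of a direct product of copies of `N`. -/
theorem prime_module_iff_mem_pi_closure
    {R : Type u} {M : Type u} [Ring R] [AddCommGroup M] [Module R M] :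
    (∀ N : Submodule R M, N ≠ ⊥ → Module.annihilator R N = Module.annihilator R M)
      ↔ (∀ N : Submodule R M, N ≠ ⊥ →
          ∃ (I : Type u) (B : Submodule R (I → N)) (A : Submodule R B)
            (f : M →ₗ[R] (B ⧸ A)), Function.Injective f) := by
  constructor
  · intro hprime N hN
    -- `g` maps the free module `M →₀ R` onto `M`
    set g : (M →₀ R) →ₗ[R] M := Finsupp.linearCombination R id with hgdef
    have hgsurj : Function.Surjective g := by
      intro m
      exact ⟨Finsupp.single m 1, by simp [hgdef]⟩
    -- `h` maps the free module into a product of copies of `N`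
    set h : (M →₀ R) →ₗ[R] (M × N → N) :=
      { toFun := fun x p => x p.1 • p.2
        map_add' := by intro x y; funext p; simp [add_smul]
        map_smul' := by intro c x; funext p; simp [mul_smul] } with hhdef
    have hker : LinearMap.ker h ≤ LinearMap.ker g := by
      intro x hx
      have hx' : ∀ (m : M) (n : N), x m • n = (0 : N) := by
        intro m n
        exact congrFun (LinearMap.mem_ker.mp hx) (m, n)
      have hann : ∀ m : M, x m ∈ Module.annihilator R M := by
        intro m
        rw [← hprime N hN]
        exact Module.mem_annihilator.mpr (hx' m)
      rw [LinearMap.mem_ker, hgdef, Finsupp.linearCombination_apply]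
      refine Finset.sum_eq_zero ?_
      intro m _
      exact Module.mem_annihilator.mp (hann m) m
    set B : Submodule R (M × N → N) := LinearMap.range h with hBdef
    set A : Submodule R B := Submodule.map h.rangeRestrict (LinearMap.ker g)
      with hAdef
    -- the induced map from the free module to `B ⧸ A`
    set f0 : (M →₀ R) →ₗ[R] B ⧸ A := A.mkQ.comp h.rangeRestrict with hf0def
    have hkerf0 : LinearMap.ker f0 = LinearMap.ker g := by
      apply le_antisymm
      · intro x hx
        rw [LinearMap.mem_ker, hf0def, LinearMap.comp_apply,
          Submodule.mkQ_apply, Submodule.Quotient.mk_eq_zero] at hx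
        obtain ⟨y, hy, hyx⟩ := hx
        have hxy : x - y ∈ LinearMap.ker h := by
          rw [LinearMap.mem_ker, map_sub, sub_eq_zero]
          exact (congrArg Subtype.val hyx).symm
        have := add_mem (hker hxy) hy
        rwa [sub_add_cancel] at this
      · intro x hx
        rw [LinearMap.mem_ker, hf0def, LinearMap.comp_apply,
          Submodule.mkQ_apply, Submodule.Quotient.mk_eq_zero]
        exact Submodule.mem_map_of_mem hx
    set f1 : ((M →₀ R) ⧸ LinearMap.ker g) →ₗ[R] B ⧸ A :=
      (LinearMap.ker g).liftQ f0 hkerf0.ge with hf1def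
    have hf1inj : Function.Injective f1 := by
      rw [← LinearMap.ker_eq_bot, hf1def]
      exact Submodule.ker_liftQ_eq_bot _ _ _ hkerf0.le
    refine ⟨M × N, B, A,
      f1.comp (g.quotKerEquivOfSurjective hgsurj).symm.toLinearMap, ?_⟩
    exact hf1inj.comp (g.quotKerEquivOfSurjective hgsurj).symm.injective
  · intro hcond N hN
    obtain ⟨I, B, A, f, hf⟩ := hcond N hN
    apply le_antisymm
    · intro r hr
      rw [Module.mem_annihilator] at hr ⊢
      intro m
      apply hf
      obtain ⟨b, hb⟩ := Submodule.Quotient.mk_surjective A (f m)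
      have hrb : r • b = 0 := by
        ext i
        exact congrArg Subtype.val (hr ((b : I → N) i))
      rw [map_smul, map_zero, ← hb, ← Submodule.Quotient.mk_smul, hrb,
        Submodule.Quotient.mk_zero]
    · intro r hr
      rw [Module.mem_annihilator] at hr ⊢
      intro n
      exact Subtype.ext (hr (n : M))
end

section
/- Over any ring R, the sum of two α-critical (with respect to Krull dimension) submodules N₁, N₂ of a uniform module M is again α-critical. -/
universe u

/-- The deviation (in the sense of Gabriel–Rentschler) of the interval `[a, b]` in a
preorder is `≤ α`: in any descending chain inside `[a, b]`, all but finitely many of the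
consecutive intervals are trivial or have deviation `< α`. -/
def DevLE {L : Type u} [Preorder L] (α : Ordinal.{0}) (a b : L) : Prop :=
  ∀ f : ℕ → L, (∀ n, f (n + 1) ≤ f n) → (∀ n, a ≤ f n) → (∀ n, f n ≤ b) →
    ∃ N : ℕ, ∀ n, N ≤ n →
      f (n + 1) = f n ∨ ∃ β : {β : Ordinal.{0} // β < α}, DevLE β.1 (f (n + 1)) (f n)
termination_by α
decreasing_by exact β.2

/-- The deviation of the interval `[a, b]` is `< α` (trivial intervals having
deviation `-∞`). -/
def DevLT {L : Type u} [Preorder L] (α : Ordinal.{0}) (a b : L) : Prop :=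
  a = b ∨ ∃ β < α, DevLE β a b

/-- The deviation of the interval `[a, b]` is exactly `α`. -/
def IsDev {L : Type u} [Preorder L] (α : Ordinal.{0}) (a b : L) : Prop :=
  DevLE α a b ∧ ∀ β < α, ¬ DevLE β a b

/-- The interval `[a, b]` in the lattice of submodules is `α`-critical: it is nontrivial,
has Krull dimension (deviation) `α`, and every proper quotient (i.e. every interval
`[c, b]` with `a < c ≤ b`) has Krull dimension `< α`. -/
def IsCriticalInterval {L : Type u} [Preorder L] (α : Ordinal.{0}) (a b : L) : Prop :=
  a < b ∧ IsDev α a b ∧ ∀ c, a < c → c ≤ b → DevLT α c b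

/-- The Gabriel–Rentschler Krull dimension of the module `M` is `≤ α`. -/
def Module.KdimLE (R : Type u) (M : Type u) [Ring R] [AddCommGroup M] [Module R M]
    (α : Ordinal.{0}) : Prop :=
  DevLE α (⊥ : Submodule R M) ⊤

/-- The Gabriel–Rentschler Krull dimension of the module `M` is exactly `α`. -/
def Module.IsKdim (R : Type u) (M : Type u) [Ring R] [AddCommGroup M] [Module R M]
    (α : Ordinal.{0}) : Prop :=
  IsDev α (⊥ : Submodule R M) ⊤

/-- The module `M` is `α`-critical for the Gabriel–Rentschler Krull dimension:
`Kdim M = α` and `Kdim (M / N) < α` for every nonzero submodule `N`. -/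
def Module.IsCritical (R : Type u) (M : Type u) [Ring R] [AddCommGroup M] [Module R M]
    (α : Ordinal.{0}) : Prop :=
  IsCriticalInterval α (⊥ : Submodule R M) ⊤

section Aux

variable {L : Type u} {L' : Type u}

theorem devLE_anti [Preorder L] {α : Ordinal.{0}} {a b a' b' : L}
    (ha : a' ≤ a) (hb : b ≤ b') (h : DevLE α a' b') : DevLE α a b := by
  rw [DevLE] at h ⊢
  intro f hf h1 h2
  exact h f hf (fun n => ha.trans (h1 n)) (fun n => (h2 n).trans hb)

theorem devLE_comap [Preorder L] [Preorder L'] (g : L → L') (hg : Monotone g)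
    (α : Ordinal.{0}) (a b : L)
    (hstrict : ∀ x y, a ≤ x → x ≤ y → y ≤ b → g x = g y → x = y)
    (h : DevLE α (g a) (g b)) : DevLE α a b := by
  rw [DevLE] at h ⊢
  intro f hf h1 h2
  obtain ⟨N, hN⟩ := h (fun n => g (f n)) (fun n => hg (hf n)) (fun n => hg (h1 n))
    (fun n => hg (h2 n))
  refine ⟨N, fun n hn => ?_⟩
  rcases hN n hn with heq | ⟨⟨β, hβ⟩, hd⟩
  · exact Or.inl (hstrict _ _ (h1 _) (hf n) (h2 n) heq)
  · exact Or.inr ⟨⟨β, hβ⟩, devLE_comap g hg β _ _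
      (fun x y hx hxy hy => hstrict x y ((h1 (n + 1)).trans hx) hxy (hy.trans (h2 n))) hd⟩
termination_by α
decreasing_by exact hβ

theorem devLE_prod [PartialOrder L] [PartialOrder L'] (α β : Ordinal.{0})
    (a b : L) (a' b' : L') (h : DevLE α a b) (h' : DevLE β a' b') :
    DevLE (α ⊔ β) (a, a') (b, b') := by
  rw [DevLE] at h h' ⊢
  intro f hf h1 h2
  obtain ⟨N, hN⟩ := h (fun n => (f n).1) (fun n => (hf n).1) (fun n => (h1 n).1)
    (fun n => (h2 n).1)
  obtain ⟨N', hN'⟩ := h' (fun n => (f n).2) (fun n => (hf n).2) (fun n => (h1 n).2)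
    (fun n => (h2 n).2)
  refine ⟨max N N', fun n hn => ?_⟩
  rcases hN n (le_of_max_le_left hn) with heq1 | ⟨⟨β₁, hβ₁⟩, hd1⟩ <;>
    rcases hN' n (le_of_max_le_right hn) with heq2 | ⟨⟨β₂, hβ₂⟩, hd2⟩
  · exact Or.inl (Prod.ext heq1 heq2)
  · refine Or.inr ⟨⟨β₂, hβ₂.trans_le le_sup_right⟩, ?_⟩
    refine devLE_comap Prod.snd (fun x y hxy => (Prod.le_def.mp hxy).2) β₂ (f (n + 1)) (f n)
      (fun x y hx hxy hy hsnd => ?_) hd2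
    refine Prod.ext (le_antisymm hxy.1 (hy.1.trans ?_)) hsnd
    rw [← heq1]; exact hx.1
  · refine Or.inr ⟨⟨β₁, hβ₁.trans_le le_sup_left⟩, ?_⟩
    refine devLE_comap Prod.fst (fun x y hxy => (Prod.le_def.mp hxy).1) β₁ (f (n + 1)) (f n)
      (fun x y hx hxy hy hfst => ?_) hd1
    refine Prod.ext hfst (le_antisymm hxy.2 (hy.2.trans ?_))
    rw [← heq2]; exact hx.2
  · refine Or.inr ⟨⟨β₁ ⊔ β₂, sup_lt_iff.mpr
      ⟨hβ₁.trans_le le_sup_left, hβ₂.trans_le le_sup_right⟩⟩, ?_⟩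
    have := devLE_prod β₁ β₂ (f (n + 1)).1 (f n).1 (f (n + 1)).2 (f n).2 hd1 hd2
    simpa using this
termination_by (α, β)
decreasing_by exact Prod.Lex.left _ _ hβ₁

theorem devLE_glue [Lattice L] [IsModularLattice L] (α β : Ordinal.{0}) (a b c : L)
    (hab : a ≤ b) (hbc : b ≤ c) (h : DevLE α a b) (h' : DevLE β b c) :
    DevLE (α ⊔ β) a c := by
  have hp : DevLE (α ⊔ β) ((a ⊓ b, a ⊔ b) : L × L) (c ⊓ b, c ⊔ b) := by
    rw [inf_eq_left.mpr hab, sup_eq_right.mpr hab, inf_eq_right.mpr hbc,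
      sup_eq_left.mpr hbc]
    exact devLE_prod α β a b b c h h'
  refine devLE_comap (fun x => ((x ⊓ b, x ⊔ b) : L × L))
    (fun x y hxy => Prod.le_def.mpr ⟨inf_le_inf_right b hxy, sup_le_sup_right hxy b⟩)
    (α ⊔ β) a c (fun x y _ hxy _ heq => ?_) hp
  have h1 : x ⊓ b = y ⊓ b := congrArg Prod.fst heq
  have h2 : x ⊔ b = y ⊔ b := congrArg Prod.snd heq
  refine le_antisymm hxy ?_
  calc y = (x ⊔ b) ⊓ y := by rw [h2]; exact (inf_eq_right.mpr le_sup_left).symm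
    _ = x ⊔ b ⊓ y := sup_inf_assoc_of_le _ hxy
    _ ≤ x ⊔ b ⊓ x := by rw [inf_comm b y, inf_comm b x, ← h1]
    _ = x := by rw [inf_comm]; exact sup_eq_left.mpr inf_le_left

end Aux

/-- Over any ring `R`, the sum of two `α`-critical (for Krull dimension) submodules
`N₁, N₂` of a uniform module `M` is again `α`-critical.  (A submodule `N ≤ M` is
`α`-critical iff the interval `[⊥, N]` of the submodule lattice is `α`-critical.) -/


theorem sup_of_critical_submodules_isCritical
    {R : Type u} {M : Type u} [Ring R] [AddCommGroup M] [Module R M]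
    (huniform : ∀ A B : Submodule R M, A ≠ ⊥ → B ≠ ⊥ → A ⊓ B ≠ ⊥)
    {α : Ordinal.{0}} (N₁ N₂ : Submodule R M)
    (h₁ : IsCriticalInterval α (⊥ : Submodule R M) N₁)
    (h₂ : IsCriticalInterval α (⊥ : Submodule R M) N₂) :
    IsCriticalInterval α (⊥ : Submodule R M) (N₁ ⊔ N₂) := by
  by_cases h21 : N₂ ≤ N₁
  · rwa [sup_eq_left.mpr h21]
  have hstrict : ∀ x y : Submodule R M, N₁ ≤ x → x ≤ y → y ≤ N₁ ⊔ N₂ →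
      x ⊓ N₂ = y ⊓ N₂ → x = y := by
    intro x y hx hxy hy heq
    refine le_antisymm hxy ?_
    calc y = (N₁ ⊔ N₂) ⊓ y := (inf_eq_right.mpr hy).symm
      _ = N₁ ⊔ N₂ ⊓ y := sup_inf_assoc_of_le _ (hx.trans hxy)
      _ = N₁ ⊔ N₂ ⊓ x := by rw [inf_comm N₂ y, inf_comm N₂ x, ← heq]
      _ ≤ x := sup_le hx inf_le_right
  have hI : (⊥ : Submodule R M) < N₁ ⊓ N₂ :=
    bot_lt_iff_ne_bot.mpr (huniform _ _ h₁.1.ne' h₂.1.ne')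
  obtain ⟨γ, hγα, hγ⟩ : ∃ γ < α, DevLE γ N₁ (N₁ ⊔ N₂) := by
    rcases h₂.2.2 (N₁ ⊓ N₂) hI inf_le_right with heq | ⟨γ, hγα, hγ⟩
    · exact absurd (inf_eq_right.mp heq) h21
    · refine ⟨γ, hγα, devLE_comap (fun x => x ⊓ N₂)
        (fun x y hxy => inf_le_inf_right N₂ hxy) γ N₁ (N₁ ⊔ N₂) hstrict ?_⟩
      have hS : (N₁ ⊔ N₂) ⊓ N₂ = N₂ := inf_eq_right.mpr le_sup_right
      simpa [hS] using hγ
  refine ⟨lt_of_lt_of_le h₁.1 le_sup_left, ⟨?_, ?_⟩, ?_⟩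
  · have := devLE_glue α γ ⊥ N₁ (N₁ ⊔ N₂) bot_le le_sup_left h₁.2.1.1 hγ
    rwa [sup_eq_left.mpr hγα.le] at this
  · intro β hβ hle
    exact h₁.2.1.2 β hβ (devLE_anti le_rfl le_sup_left hle)
  · intro c hc hcS
    have hcI : (⊥ : Submodule R M) < c ⊓ N₁ :=
      bot_lt_iff_ne_bot.mpr (huniform c N₁ hc.ne' h₁.1.ne')
    rcases h₁.2.2 (c ⊓ N₁) hcI inf_le_right with heq | ⟨δ, hδ, hdev⟩
    · exact Or.inr ⟨γ, hγα, devLE_anti (heq ▸ inf_le_left : N₁ ≤ c) le_rfl hγ⟩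
    · exact Or.inr ⟨δ ⊔ γ, sup_lt_iff.mpr ⟨hδ, hγα⟩,
        devLE_anti inf_le_left le_rfl
          (devLE_glue δ γ (c ⊓ N₁) N₁ (N₁ ⊔ N₂) inf_le_right le_sup_left hdev hγ)⟩
end

section
/- Let R be a prime right noetherian ring. Then any two uniform right ideals of R are subisomorphic, and consequently all critical right ideals of maximal Krull dimension have isomorphic injective hulls; hence Mod R has, up to isomorphism, a unique indecomposable injective of critical dimension equal to Kdim R. -/
set_option linter.unusedSectionVars false
set_option maxHeartbeats 1000000


universe u

/-- `E` is an injective hull of `M`. -/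
def IsInjectiveHull (R : Type u) (M E : Type u) [Ring R] [AddCommGroup M] [Module R M]
    [AddCommGroup E] [Module R E] : Prop :=
  Module.Injective R E ∧ ∃ f : M →ₗ[R] E, Function.Injective f ∧
    ∀ K : Submodule R E, K ≠ ⊥ → K ⊓ LinearMap.range f ≠ ⊥

/-- A nonzero ideal of `R` is uniform if any two of its nonzero submodules intersect
nontrivially. -/
def IsUniformIdeal (R : Type u) [Ring R] (U : Submodule R R) : Prop :=
  U ≠ ⊥ ∧ ∀ A B : Submodule R R, A ≤ U → B ≤ U → A ≠ ⊥ → B ≠ ⊥ → A ⊓ B ≠ ⊥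


section DevLemmas
variable {L : Type u} [Preorder L]

theorem devLE_iff {α : Ordinal.{0}} {a b : L} : DevLE α a b ↔
    ∀ f : ℕ → L, (∀ n, f (n + 1) ≤ f n) → (∀ n, a ≤ f n) → (∀ n, f n ≤ b) →
    ∃ N : ℕ, ∀ n, N ≤ n →
      f (n + 1) = f n ∨ ∃ β : {β : Ordinal.{0} // β < α}, DevLE β.1 (f (n + 1)) (f n) := by
  rw [DevLE]

theorem devLE_mono_ord {α α' : Ordinal.{0}} {a b : L} (h : α ≤ α') (hd : DevLE α a b) :
    DevLE α' a b := by
  rw [devLE_iff] at hd ⊢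
  intro f hf hfa hfb
  obtain ⟨N, hN⟩ := hd f hf hfa hfb
  refine ⟨N, fun n hn => (hN n hn).imp id ?_⟩
  rintro ⟨β, hβ⟩
  exact ⟨⟨β.1, lt_of_lt_of_le β.2 h⟩, hβ⟩

theorem devLE_mono {α : Ordinal.{0}} {a b a' b' : L} (ha : a ≤ a') (hb : b' ≤ b)
    (hd : DevLE α a b) : DevLE α a' b' := by
  rw [devLE_iff] at hd ⊢
  intro f hf hfa hfb
  exact hd f hf (fun n => ha.trans (hfa n)) (fun n => (hfb n).trans hb)

theorem devLE_self {L' : Type u} [PartialOrder L'] (α : Ordinal.{0}) (a : L') : DevLE α a a := by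
  rw [devLE_iff]
  intro f hf hfa hfb
  exact ⟨0, fun n _ => Or.inl (le_antisymm ((hfb _).trans (hfa _)) ((hfb _).trans (hfa _)))⟩

/-- Transfer of deviation along a monotone map with a one-sided monotone inverse on the
interval. -/
theorem devLE_transfer {L' : Type u} [Preorder L'] :
    ∀ (α : Ordinal.{0}) (g : L → L') (h : L' → L) (_ : Monotone g) (_ : Monotone h)
    (a b : L) (_ : ∀ x, a ≤ x → x ≤ b → h (g x) = x),
    DevLE α (g a) (g b) → DevLE α a b := by
  intro α
  induction α using Ordinal.induction with
  | _ α IH =>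
    intro g h hg hh a b hgh hd
    rw [devLE_iff] at hd ⊢
    intro f hf hfa hfb
    obtain ⟨N, hN⟩ := hd (g ∘ f) (fun n => hg (hf n)) (fun n => hg (hfa n)) (fun n => hg (hfb n))
    refine ⟨N, fun n hn => ?_⟩
    rcases hN n hn with heq | ⟨β, hβ⟩
    · left
      have h1 := hgh (f (n + 1)) (hfa _) (hfb _)
      have h2 := hgh (f n) (hfa _) (hfb _)
      calc f (n + 1) = h (g (f (n + 1))) := h1.symm
        _ = h (g (f n)) := congrArg h heq
        _ = f n := h2
    · right
      refine ⟨β, IH β.1 β.2 g h hg hh _ _ (fun x hx1 hx2 => hgh x ((hfa _).trans hx1)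
        (hx2.trans (hfb _))) hβ⟩

end DevLemmas

section Modular
variable {L : Type u} [Lattice L] [IsModularLattice L]

/-- Deviation of a composite interval is at most the max of the deviations of the pieces. -/
theorem devLE_sup : ∀ (δ β γ : Ordinal.{0}), β ⊔ γ = δ → ∀ (a c b : L), a ≤ c → c ≤ b →
    DevLE β a c → DevLE γ c b → DevLE δ a b := by
  intro δ
  induction δ using Ordinal.induction with
  | _ δ IH =>
    rintro β γ rfl a c b hac hcb h1 h2
    rw [devLE_iff]
    intro f hf hfa hfb
    rw [devLE_iff] at h1 h2
    obtain ⟨N₁, hN₁⟩ := h1 (fun n => f n ⊓ c) (fun n => inf_le_inf_right c (hf n))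
      (fun n => le_inf (hfa n) hac) (fun n => inf_le_right)
    obtain ⟨N₂, hN₂⟩ := h2 (fun n => f n ⊔ c) (fun n => sup_le_sup_right (hf n) c)
      (fun n => le_sup_right) (fun n => sup_le (hfb n) hcb)
    refine ⟨max N₁ N₂, fun n hn => ?_⟩
    have hn1 : N₁ ≤ n := le_trans (le_max_left _ _) hn
    have hn2 : N₂ ≤ n := le_trans (le_max_right _ _) hn
    set x' := f (n + 1) with hx'
    set x := f n with hx
    have hxx : x' ≤ x := hf n
    set m : L := x' ⊔ (x ⊓ c) with hm
    have hx'm : x' ≤ m := le_sup_left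
    have hmx : m ≤ x := sup_le hxx inf_le_left
    have hmc : m ⊓ c = x ⊓ c := by
      rw [hm, sup_comm x' (x ⊓ c), sup_inf_assoc_of_le x' (inf_le_right : x ⊓ c ≤ c)]
      exact sup_eq_left.2 (inf_le_inf_right c hxx)
    have hmsc : m ⊔ c = x' ⊔ c := by
      rw [hm, sup_assoc]
      congr 1
      exact sup_eq_right.2 inf_le_right
    -- lower interval [x', m] has deviation controlled by [x'⊓c, x⊓c]
    have lower : ∀ β' : Ordinal.{0}, DevLE β' (x' ⊓ c) (x ⊓ c) → DevLE β' x' m := by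
      intro β' hd
      refine devLE_transfer β' (fun y => y ⊓ c) (fun y => x' ⊔ y)
        (fun _ _ hy => inf_le_inf_right c hy) (fun _ _ hy => sup_le_sup_left hy x')
        x' m (fun y hy1 hy2 => ?_) (by simpa [hmc] using hd)
      show x' ⊔ (y ⊓ c) = y
      have h1 : x' ⊔ (y ⊓ c) = (x' ⊔ c) ⊓ y := by
        rw [inf_comm y c, ← sup_inf_assoc_of_le c hy1]
      rw [h1, inf_eq_right]
      exact hy2.trans ((sup_le_sup_left inf_le_right x' : m ≤ x' ⊔ c))
    -- upper interval [m, x] has deviation controlled by [x'⊔c, x⊔c]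
    have upper : ∀ γ' : Ordinal.{0}, DevLE γ' (x' ⊔ c) (x ⊔ c) → DevLE γ' m x := by
      intro γ' hd
      refine devLE_transfer γ' (fun y => y ⊔ c) (fun y => y ⊓ x)
        (fun _ _ hy => sup_le_sup_right hy c) (fun _ _ hy => inf_le_inf_right x hy)
        m x (fun y hy1 hy2 => ?_) (by simpa [hmsc] using hd)
      show (y ⊔ c) ⊓ x = y
      rw [sup_inf_assoc_of_le c hy2, inf_comm c x, sup_eq_left]
      exact le_trans (le_sup_right.trans hm.ge) hy1
    have key : ∀ δ₁ δ₂ : Ordinal.{0}, δ₁ < β ⊔ γ → δ₂ < β ⊔ γ → DevLE δ₁ x' m → DevLE δ₂ m x →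
        f (n + 1) = f n ∨ ∃ β_1 : {b : Ordinal.{0} // b < β ⊔ γ}, DevLE β_1.1 (f (n + 1)) (f n) := by
      intro δ₁ δ₂ h₁ h₂ d₁ d₂
      right
      refine ⟨⟨δ₁ ⊔ δ₂, sup_lt_iff.2 ⟨h₁, h₂⟩⟩, ?_⟩
      exact IH (δ₁ ⊔ δ₂) (sup_lt_iff.2 ⟨h₁, h₂⟩) δ₁ δ₂ rfl x' m x hx'm hmx d₁ d₂
    have hβγ : (β : Ordinal.{0}) ≤ β ⊔ γ := le_sup_left
    have hγβ : (γ : Ordinal.{0}) ≤ β ⊔ γ := le_sup_right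
    rcases hN₁ n hn1 with he1 | ⟨β', hβ'⟩ <;> rcases hN₂ n hn2 with he2 | ⟨γ', hγ'⟩
    · -- both equal: f (n+1) = f n
      left
      have hm1 : m = x' := by
        rw [hm, ← he1]
        exact sup_eq_left.2 inf_le_left
      have hm2 : m = x := by
        have : (x' ⊔ c) ⊓ x = m := by
          rw [sup_inf_assoc_of_le c hxx, inf_comm c x]
        rw [← this, he2, inf_eq_right.2 le_sup_left]
      exact hm1.symm.trans hm2
    · -- lower trivial, upper dev
      have hm1 : m = x' := by
        rw [hm, ← he1]
        exact sup_eq_left.2 inf_le_left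
      exact key γ'.1 γ'.1 (lt_of_lt_of_le γ'.2 hγβ) (lt_of_lt_of_le γ'.2 hγβ)
        (hm1 ▸ devLE_self γ'.1 m) (upper γ'.1 hγ')
    · -- lower dev, upper trivial
      have hm2 : m = x := by
        have h3 : (x' ⊔ c) ⊓ x = m := by
          rw [sup_inf_assoc_of_le c hxx, inf_comm c x]
        rw [← h3, he2, inf_eq_right.2 le_sup_left]
      exact key β'.1 β'.1 (lt_of_lt_of_le β'.2 hβγ) (lt_of_lt_of_le β'.2 hβγ)
        (lower β'.1 hβ') (hm2 ▸ devLE_self β'.1 m)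
    · exact key β'.1 γ'.1 (lt_of_lt_of_le β'.2 hβγ) (lt_of_lt_of_le γ'.2 hγβ)
        (lower β'.1 hβ') (upper γ'.1 hγ')
end Modular


section RingCore
variable {R : Type u} [Ring R]

/-- Left annihilator of an element, as a left ideal. -/
noncomputable def lann (x : R) : Submodule R R := LinearMap.ker (LinearMap.toSpanSingleton R R x)

theorem mem_lann {x y : R} : y ∈ lann x ↔ y * x = 0 := by
  simp [lann, LinearMap.mem_ker, LinearMap.toSpanSingleton_apply, smul_eq_mul]

theorem lann_mono_right {x s : R} : lann x ≤ lann (x * s) := by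
  intro y hy
  rw [mem_lann] at hy ⊢
  rw [← mul_assoc, hy, zero_mul]

theorem mul_pow_succ (x y : R) : ∀ m : ℕ, (x * y) ^ (m + 1) = x * ((y * x) ^ m * y)
  | 0 => by simp
  | m + 1 => by
    rw [pow_succ, mul_pow_succ x y m, pow_succ]
    simp only [mul_assoc]

variable [IsNoetherianRing R]

theorem exists_max_mem (S : Set (Submodule R R)) (hS : S.Nonempty) :
    ∃ M ∈ S, ∀ I ∈ S, ¬ M < I :=
  (set_has_maximal_iff_noetherian.mpr inferInstance) S hS

/-- In a prime ring with ACC, for any `a ≠ 0` some `a * s` is non-nilpotent. -/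
theorem exists_mul_not_nilpotent
    (hprime : ∀ a b : R, (∀ r : R, a * r * b = 0) → a = 0 ∨ b = 0)
    (a : R) (ha : a ≠ 0) : ∃ s : R, ¬ IsNilpotent (a * s) := by
  by_contra hall
  push_neg at hall
  set S : Set (Submodule R R) := {p | ∃ s : R, a * s ≠ 0 ∧ p = lann (a * s)} with hSdef
  have hSne : S.Nonempty := ⟨lann (a * 1), 1, by simpa using ha, rfl⟩
  obtain ⟨M, ⟨s₀, hs₀, rfl⟩, hmax⟩ := exists_max_mem S hSne
  set b := a * s₀ with hb
  have key : ∀ s : R, b * s * b = 0 := by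
    intro s
    by_cases hbs : b * s = 0
    · rw [hbs, zero_mul]
    have hnil : IsNilpotent (b * s) := by
      rw [hb, mul_assoc]; exact hall (s₀ * s)
    obtain ⟨n, hn⟩ := hnil
    have step : ∀ n : ℕ, (b * s) ^ n = 0 → b * s * b = 0 := by
      intro n
      induction n with
      | zero =>
        intro h0
        have h1 : (1 : R) = 0 := by simpa using h0
        rw [← mul_one (b * s * b), h1, mul_zero]
      | succ m IH =>
        intro hn
        by_cases hm : (b * s) ^ m = 0
        · exact IH hm
        rcases m with _ | k
        · rw [zero_add, pow_one] at hn; exact absurd hn hbs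
        set z := (b * s) ^ (k + 1) with hzdef
        have hzb : z = b * ((s * b) ^ k * s) := mul_pow_succ b s k
        have hza : z = a * (s₀ * ((s * b) ^ k * s)) := by rw [hzb, hb, mul_assoc]
        have hmem : lann z ∈ S := ⟨s₀ * ((s * b) ^ k * s), by rw [← hza]; exact hm,
          by rw [hza]⟩
        have hle : lann b ≤ lann z := by
          rw [hzb]; exact lann_mono_right
        have heq : lann b = lann z := eq_of_le_of_not_lt hle (hmax _ hmem)
        have hbz : b * s ∈ lann z := by
          rw [mem_lann, hzdef, ← pow_succ']
          exact hn
        rw [← heq, mem_lann] at hbz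
        exact hbz
    exact step n hn
  rcases hprime b b key with h | h <;> exact hs₀ h

/-- Every nonzero left ideal contains a non-nilpotent element. -/
theorem exists_nonnilpotent_mem
    (hprime : ∀ a b : R, (∀ r : R, a * r * b = 0) → a = 0 ∨ b = 0)
    (C : Submodule R R) (hC : C ≠ ⊥) : ∃ c ∈ C, ¬ IsNilpotent c := by
  obtain ⟨a, haC, ha⟩ := Submodule.exists_mem_ne_zero_of_ne_bot hC
  obtain ⟨s, hs⟩ := exists_mul_not_nilpotent hprime a ha
  refine ⟨s * a, C.smul_mem s haC, fun ⟨n, hn⟩ => hs ⟨n + 1, ?_⟩⟩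
  rw [mul_pow_succ, hn, zero_mul, mul_zero]

/-- Every nonzero left ideal contains a nonzero `c` with `lann (c * c) = lann c`. -/
theorem exists_stable_mem
    (hprime : ∀ a b : R, (∀ r : R, a * r * b = 0) → a = 0 ∨ b = 0)
    (C : Submodule R R) (hC : C ≠ ⊥) :
    ∃ c ∈ C, c ≠ 0 ∧ ∀ y : R, y * (c * c) = 0 → y * c = 0 := by
  obtain ⟨c₀, hc₀C, hc₀⟩ := exists_nonnilpotent_mem hprime C hC
  have hmono : Monotone (fun n : ℕ => lann (c₀ ^ (n + 1))) := by
    apply monotone_nat_of_le_succ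
    intro n
    show lann (c₀ ^ (n + 1)) ≤ lann (c₀ ^ (n + 1 + 1))
    rw [pow_succ c₀ (n + 1)]
    exact lann_mono_right
  obtain ⟨m, hm⟩ := (monotone_stabilizes_iff_noetherian (R := R) (M := R)).mpr inferInstance
    ⟨fun n : ℕ => lann (c₀ ^ (n + 1)), hmono⟩
  refine ⟨c₀ ^ (m + 1), ?_, fun h => hc₀ ⟨m + 1, h⟩, ?_⟩
  · rw [pow_succ]
    exact C.smul_mem _ hc₀C
  · intro y hy
    have h1 : y ∈ lann (c₀ ^ (2 * m + 2)) := by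
      rw [mem_lann, show 2 * m + 2 = (m + 1) + (m + 1) by ring, pow_add]
      rw [← mul_assoc] at hy ⊢
      exact hy
    have h2 : lann (c₀ ^ (2 * m + 1 + 1)) = lann (c₀ ^ (m + 1)) := (hm (2 * m + 1)
      (by omega)).symm
    rw [show 2 * m + 2 = 2 * m + 1 + 1 by ring] at h1
    rw [h2, mem_lann] at h1
    exact h1

end RingCore

section Goldie
variable {R : Type u} [Ring R]

theorem good_indep : ∀ (n : ℕ) (c : Fin n → R),
    (∀ i, ∀ y : R, y * (c i * c i) = 0 → y * c i = 0) →
    (∀ i j : Fin n, i < j → c j * c i = 0) →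
    ∀ s : Fin n → R, (∑ i, s i * c i) = 0 → ∀ i, s i * c i = 0 := by
  intro n
  induction n with
  | zero => intro c _ _ s _ i; exact i.elim0
  | succ m IH =>
    intro c hstab hprod s hsum
    have h1 : (∑ j : Fin (m + 1), s j * c j) * c 0 = 0 := by rw [hsum, zero_mul]
    rw [Finset.sum_mul] at h1
    have h2 : ∀ j : Fin (m + 1), j ≠ 0 → s j * c j * c 0 = 0 := by
      intro j hj
      rw [mul_assoc, hprod 0 j (Fin.pos_iff_ne_zero.mpr hj), mul_zero]
    rw [Fintype.sum_eq_single 0 h2] at h1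
    have h0 : s 0 * c 0 = 0 := hstab 0 (s 0) (by rw [← mul_assoc]; exact h1)
    have hsum' : ∑ j : Fin m, s j.succ * c j.succ = 0 := by
      have := hsum
      rw [Fin.sum_univ_succ, h0, zero_add] at this
      exact this
    have htail := IH (fun j => c j.succ) (fun i => hstab i.succ)
      (fun i j hij => hprod i.succ j.succ (Fin.succ_lt_succ_iff.mpr hij))
      (fun j => s j.succ) hsum'
    intro i
    induction i using Fin.cases with
    | zero => exact h0
    | succ j => exact htail j

variable [IsNoetherianRing R]

theorem goldie_element
    (hprime : ∀ a b : R, (∀ r : R, a * r * b = 0) → a = 0 ∨ b = 0)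
    (L : Submodule R R) (hess : ∀ B : Submodule R R, B ≠ ⊥ → L ⊓ B ≠ ⊥) :
    ∃ c ∈ L, ∀ y : R, y * c = 0 → y = 0 := by
  set 𝒮 : Set (Submodule R R) := {E | ∃ (n : ℕ) (c : Fin n → R),
    (∀ i, c i ∈ L) ∧ (∀ i, c i ≠ 0) ∧ (∀ i, ∀ y : R, y * (c i * c i) = 0 → y * c i = 0) ∧
    (∀ i j : Fin n, i < j → c j * c i = 0) ∧ E = Submodule.span R (Set.range c)} with h𝒮
  have hne : 𝒮.Nonempty := ⟨⊥, 0, Fin.elim0, fun i => i.elim0, fun i => i.elim0,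
    fun i => i.elim0, fun i => i.elim0, by
      rw [show Set.range (Fin.elim0 : Fin 0 → R) = ∅ from Set.range_eq_empty _,
        Submodule.span_empty]⟩
  obtain ⟨E, ⟨n, c, hcL, hc0, hcs, hcp, hE⟩, hmax⟩ := exists_max_mem 𝒮 hne
  by_cases hD : (⨅ i : Fin n, lann (c i)) = ⊥
  · refine ⟨∑ i, c i, Submodule.sum_mem L (fun i _ => hcL i), fun y hy => ?_⟩
    have hterm : ∀ i, y * c i = 0 :=
      good_indep n c hcs hcp (fun _ => y) (by rwa [← Finset.mul_sum])
    have hyD : y ∈ (⨅ i : Fin n, lann (c i)) :=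
      (Submodule.mem_iInf _).2 (fun i => mem_lann.2 (hterm i))
    rw [hD, Submodule.mem_bot] at hyD
    exact hyD
  · exfalso
    obtain ⟨d, hdmem, hd0, hdstab⟩ := exists_stable_mem hprime _ (hess _ hD)
    have hdL : d ∈ L := hdmem.1
    have hdD : d ∈ (⨅ i : Fin n, lann (c i)) := hdmem.2
    have hdann : ∀ i : Fin n, d * c i = 0 := fun i =>
      mem_lann.1 ((Submodule.mem_iInf _).1 hdD i)
    set c' : Fin (n + 1) → R := Fin.snoc c d with hc'
    have hlast : c' (Fin.last n) = d := Fin.snoc_last _ _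
    have hcast : ∀ i : Fin n, c' i.castSucc = c i := fun i => Fin.snoc_castSucc _ _ _
    have hcL' : ∀ i, c' i ∈ L := by
      intro i
      induction i using Fin.lastCases with
      | last => rw [hlast]; exact hdL
      | cast j => rw [hcast]; exact hcL j
    have hc0' : ∀ i, c' i ≠ 0 := by
      intro i
      induction i using Fin.lastCases with
      | last => rw [hlast]; exact hd0
      | cast j => rw [hcast]; exact hc0 j
    have hcs' : ∀ i, ∀ y : R, y * (c' i * c' i) = 0 → y * c' i = 0 := by
      intro i
      induction i using Fin.lastCases with
      | last => rw [hlast]; exact hdstab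
      | cast j => rw [hcast]; exact hcs j
    have hcp' : ∀ i j : Fin (n + 1), i < j → c' j * c' i = 0 := by
      intro i j hij
      induction j using Fin.lastCases with
      | last =>
        induction i using Fin.lastCases with
        | last => exact absurd hij (lt_irrefl _)
        | cast i' => rw [hlast, hcast]; exact hdann i'
      | cast j' =>
        induction i using Fin.lastCases with
        | last => exact absurd (hij.trans (Fin.castSucc_lt_last j')) (lt_irrefl _)
        | cast i' =>
          rw [hcast, hcast]
          exact hcp i' j' (Fin.castSucc_lt_castSucc_iff.mp hij)
    have hdE : d ∉ E := by
      intro hd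
      rw [hE] at hd
      obtain ⟨s, hs⟩ := (Submodule.mem_span_range_iff_exists_fun R).1 hd
      set s' : Fin (n + 1) → R := Fin.snoc s (-1) with hs'
      have hsum : ∑ i, s' i * c' i = 0 := by
        rw [Fin.sum_univ_castSucc]
        have hterm : ∀ i : Fin n, s' i.castSucc * c' i.castSucc = s i * c i := by
          intro i
          rw [hcast, hs', Fin.snoc_castSucc]
        rw [Finset.sum_congr rfl (fun i _ => hterm i), hlast, hs', Fin.snoc_last]
        have : ∑ i, s i * c i = d := by
          rw [← hs]
          exact Finset.sum_congr rfl (fun i _ => (smul_eq_mul (α := R) _ _).symm ▸ rfl)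
        rw [this, neg_one_mul, add_neg_cancel]
      have := good_indep (n + 1) c' hcs' hcp' s' hsum (Fin.last n)
      rw [hs', Fin.snoc_last, hlast, neg_one_mul, neg_eq_zero] at this
      exact hd0 this
    have hEE' : E < Submodule.span R (Set.range c') := by
      constructor
      · rw [hE]
        apply Submodule.span_mono
        rintro x ⟨i, rfl⟩
        exact ⟨i.castSucc, hcast i⟩
      · intro hge
        exact hdE (hge (Submodule.subset_span ⟨Fin.last n, hlast⟩))
    exact hmax _ ⟨n + 1, c', hcL', hc0', hcs', hcp', rfl⟩ hEE'

theorem nonsingular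
    (hprime : ∀ a b : R, (∀ r : R, a * r * b = 0) → a = 0 ∨ b = 0)
    (a : R) (hess : ∀ B : Submodule R R, B ≠ ⊥ → lann a ⊓ B ≠ ⊥) : a = 0 := by
  by_contra ha
  set S : Set (Submodule R R) :=
    {p | ∃ x : R, x ≠ 0 ∧ (∀ B : Submodule R R, B ≠ ⊥ → lann x ⊓ B ≠ ⊥) ∧ p = lann x} with hS
  have hne : S.Nonempty := ⟨lann a, a, ha, hess, rfl⟩
  obtain ⟨M, ⟨x, hx, hxe, rfl⟩, hmax⟩ := exists_max_mem S hne
  obtain ⟨s, hs⟩ : ∃ s, x * s * x ≠ 0 := by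
    by_contra h
    push_neg at h
    rcases hprime x x (fun r => by simpa using h r) with h' | h' <;> exact hx h'
  have hxs : x * s ≠ 0 := fun h => hs (by rw [h, zero_mul])
  have le1 : lann x ≤ lann (x * s) := lann_mono_right
  have le2 : lann x ≤ lann (x * s * x) := le_trans le1 lann_mono_right
  have esstr : ∀ z : R, lann x ≤ lann z → ∀ B : Submodule R R, B ≠ ⊥ → lann z ⊓ B ≠ ⊥ := by
    intro z hz B hB h
    exact hxe B hB (eq_bot_iff.2 (le_trans (inf_le_inf_right B hz) h.le))
  have e1 : lann (x * s) = lann x :=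
    (eq_of_le_of_not_lt le1 (hmax _ ⟨x * s, hxs, esstr _ le1, rfl⟩)).symm
  have e2 : lann (x * s * x) = lann x :=
    (eq_of_le_of_not_lt le2 (hmax _ ⟨x * s * x, hs, esstr _ le2, rfl⟩)).symm
  have hspan : Submodule.span R {x * s} ≠ ⊥ := fun h =>
    hxs (Submodule.span_singleton_eq_bot.1 h)
  obtain ⟨z, hz, hz0⟩ := Submodule.exists_mem_ne_zero_of_ne_bot (hxe _ hspan)
  obtain ⟨r, hr⟩ := Submodule.mem_span_singleton.1 hz.2
  have hzx : z * x = 0 := mem_lann.1 hz.1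
  rw [smul_eq_mul] at hr
  have hrx : r * x = 0 := by
    have hmem : r ∈ lann (x * s * x) := by
      rw [mem_lann, ← mul_assoc, hr, hzx]
    rw [e2, mem_lann] at hmem
    exact hmem
  exact hz0 (by rw [← hr, ← mul_assoc, hrx, zero_mul])
end Goldie

section LemmaA
variable {R : Type u} [Ring R] [IsNoetherianRing R]

/-- Any nonzero left ideal contains an isomorphic copy of any uniform left ideal. -/
theorem uniform_embeds
    (hprime : ∀ a b : R, (∀ r : R, a * r * b = 0) → a = 0 ∨ b = 0)
    (U V : Submodule R R) (hU : U ≠ ⊥) (hV : IsUniformIdeal R V) :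
    ∃ f : V →ₗ[R] U, Function.Injective f := by
  obtain ⟨v₀, hv₀V, hv₀⟩ := Submodule.exists_mem_ne_zero_of_ne_bot hV.1
  obtain ⟨u₀, hu₀U, hu₀⟩ := Submodule.exists_mem_ne_zero_of_ne_bot hU
  obtain ⟨r, hr⟩ : ∃ r, v₀ * r * u₀ ≠ 0 := by
    by_contra h
    push_neg at h
    rcases hprime v₀ u₀ h with h' | h' <;> [exact hv₀ h'; exact hu₀ h']
  set u : R := r * u₀ with hu
  have huU : u ∈ U := U.smul_mem r hu₀U
  have hv₀u : v₀ * u ≠ 0 := by rwa [hu, ← mul_assoc]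
  -- the kernel of right multiplication by u on V is trivial
  have hker : ∀ v ∈ V, v * u = 0 → v = 0 := by
    intro w hwV hwu
    by_contra hw
    -- K := V ⊓ lann u is nonzero
    set K : Submodule R R := V ⊓ lann u with hK
    have hKne : K ≠ ⊥ := by
      intro h
      rw [eq_bot_iff] at h
      exact hw ((Submodule.mem_bot R).1 (h ⟨hwV, mem_lann.2 hwu⟩))
    -- lann (v₀ * u) is essential
    have hEss : ∀ B : Submodule R R, B ≠ ⊥ → lann (v₀ * u) ⊓ B ≠ ⊥ := by
      intro B hB
      by_cases hBv : Submodule.map (LinearMap.toSpanSingleton R R v₀) B = ⊥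
      · -- B * v₀ = 0, so B ≤ lann (v₀ * u)
        obtain ⟨b, hbB, hb0⟩ := Submodule.exists_mem_ne_zero_of_ne_bot hB
        have hbv : b * v₀ = 0 := by
          have : (LinearMap.toSpanSingleton R R v₀) b ∈
              Submodule.map (LinearMap.toSpanSingleton R R v₀) B :=
            Submodule.mem_map_of_mem hbB
          rw [hBv, Submodule.mem_bot] at this
          simpa [LinearMap.toSpanSingleton_apply, smul_eq_mul] using this
        intro h
        rw [eq_bot_iff] at h
        refine hb0 ((Submodule.mem_bot R).1 (h (Submodule.mem_inf.2 ⟨?_, hbB⟩)))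
        rw [mem_lann, ← mul_assoc, hbv, zero_mul]
      · -- B * v₀ is a nonzero submodule of V; it meets K
        set Bv := Submodule.map (LinearMap.toSpanSingleton R R v₀) B with hBvdef
        have hBvV : Bv ≤ V := by
          rintro x ⟨b, _, rfl⟩
          simpa [LinearMap.toSpanSingleton_apply, smul_eq_mul] using
            V.smul_mem b hv₀V
        have hmeet := hV.2 K Bv inf_le_left hBvV hKne hBv
        obtain ⟨z, hz, hz0⟩ := Submodule.exists_mem_ne_zero_of_ne_bot hmeet
        obtain ⟨b, hbB, hbz⟩ := hz.2
        have hbz' : b * v₀ = z := by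
          simpa [LinearMap.toSpanSingleton_apply, smul_eq_mul] using hbz
        have hb0 : b ≠ 0 := by rintro rfl; rw [zero_mul] at hbz'; exact hz0 hbz'.symm
        intro h
        rw [eq_bot_iff] at h
        refine hb0 ((Submodule.mem_bot R).1 (h (Submodule.mem_inf.2 ⟨?_, hbB⟩)))
        rw [mem_lann, ← mul_assoc, hbz']
        exact mem_lann.1 hz.1.2
    exact hv₀u (nonsingular hprime _ hEss)
  -- define the embedding
  refine ⟨(LinearMap.toSpanSingleton R R u).restrict (p := V) (q := U) (fun x hx => ?_), ?_⟩
  · rw [LinearMap.toSpanSingleton_apply, smul_eq_mul]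
    exact U.smul_mem x huU
  rw [← LinearMap.ker_eq_bot, LinearMap.ker_eq_bot']
  intro m hm
  have : (m : R) * u = 0 := by
    have := congrArg (Subtype.val) hm
    simpa [LinearMap.restrict_apply, LinearMap.toSpanSingleton_apply, smul_eq_mul] using this
  exact Subtype.ext (hker m m.2 this)
end LemmaA

section Kdim
variable {R : Type u} [Ring R] [IsNoetherianRing R]

/-- The Krull dimension of `R/L` is smaller than that of `R` for every essential
left ideal `L` of the prime noetherian ring `R`. -/
theorem kdim_quot
    (hprime : ∀ a b : R, (∀ r : R, a * r * b = 0) → a = 0 ∨ b = 0)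
    {α : Ordinal.{0}} (hα1 : DevLE α (⊥ : Submodule R R) ⊤)
    (L : Submodule R R) (hess : ∀ B : Submodule R R, B ≠ ⊥ → L ⊓ B ≠ ⊥) :
    L = ⊤ ∨ ∃ β < α, DevLE β L (⊤ : Submodule R R) := by
  obtain ⟨c, hcL, hc⟩ := goldie_element hprime L hess
  have tpow : ∀ (n : ℕ) (y : R), y * c ^ n = 0 → y = 0 := by
    intro n
    induction n with
    | zero => intro y hy; simpa using hy
    | succ m IH =>
      intro y hy
      rw [pow_succ, ← mul_assoc] at hy
      exact IH _ (hc _ hy)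
  by_cases hone : ∃ x : R, x * c = 1
  · left
    obtain ⟨x, hx⟩ := hone
    rw [Submodule.eq_top_iff']
    intro y
    have : y = (y * x) * c := by rw [mul_assoc, hx, mul_one]
    rw [this]
    exact L.smul_mem (y * x) hcL
  · right
    have hdec : ∀ n : ℕ, Submodule.span R {c ^ (n + 1)} ≤ Submodule.span R {c ^ n} := by
      intro n
      rw [Submodule.span_singleton_le_iff_mem, pow_succ']
      exact Submodule.smul_mem _ c (Submodule.mem_span_singleton_self _)
    rw [devLE_iff] at hα1
    obtain ⟨N, hN⟩ := hα1 (fun n => Submodule.span R {c ^ n}) hdec (fun n => bot_le)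
      (fun n => le_top)
    rcases hN N le_rfl with heq | ⟨β, hβ⟩
    · exfalso
      have hmem : c ^ N ∈ Submodule.span R {c ^ (N + 1)} := by
        rw [heq]; exact Submodule.mem_span_singleton_self _
      obtain ⟨x, hx⟩ := Submodule.mem_span_singleton.1 hmem
      rw [smul_eq_mul] at hx
      have : (x * c - 1) * c ^ N = 0 := by
        rw [sub_mul, one_mul, mul_assoc, ← pow_succ', hx, sub_self]
      have h1 : x * c - 1 = 0 := tpow N _ this
      exact hone ⟨x, by rwa [sub_eq_zero] at h1⟩
    · -- transfer the deviation from [c^{N+1}R, c^N R] to [Rc, R]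
      refine ⟨β.1, β.2, ?_⟩
      set ρ := LinearMap.toSpanSingleton R R (c ^ N) with hρ
      have hkerρ : LinearMap.ker ρ = ⊥ := by
        rw [LinearMap.ker_eq_bot']
        intro m hm
        rw [hρ, LinearMap.toSpanSingleton_apply, smul_eq_mul] at hm
        exact tpow N m hm
      have htrans : DevLE β.1 (Submodule.span R {c}) (⊤ : Submodule R R) := by
        refine devLE_transfer β.1 (fun X => Submodule.map ρ X) (fun Y => Submodule.comap ρ Y)
          (fun _ _ hXY => Submodule.map_mono hXY) (fun _ _ hXY => Submodule.comap_mono hXY)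
          _ _ (fun X _ _ => by
            show Submodule.comap ρ (Submodule.map ρ X) = X
            rw [Submodule.comap_map_eq, hkerρ, sup_bot_eq]) ?_
        have h1 : Submodule.map ρ (Submodule.span R {c}) = Submodule.span R {c ^ (N + 1)} := by
          rw [Submodule.map_span, Set.image_singleton, hρ, LinearMap.toSpanSingleton_apply,
            smul_eq_mul, ← pow_succ']
        have h2 : Submodule.map ρ ⊤ = Submodule.span R {c ^ N} := by
          rw [Submodule.map_top, hρ, ← LinearMap.span_singleton_eq_range]
        show DevLE β.1 (Submodule.map ρ (Submodule.span R {c})) (Submodule.map ρ ⊤)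
        rw [h1, h2]
        exact hβ
      exact devLE_mono ((Submodule.span_singleton_le_iff_mem c L).2 hcL) le_rfl htrans
end Kdim

section Critical
variable {L : Type u} [Lattice L] [IsModularLattice L] [OrderBot L]

theorem crit_sub {α : Ordinal.{0}} {b c : L}
    (hcrit : IsCriticalInterval α ⊥ b) (hc : ⊥ < c) (hcb : c ≤ b) :
    IsCriticalInterval α ⊥ c := by
  obtain ⟨hb, ⟨hdev, hnd⟩, hq⟩ := hcrit
  refine ⟨hc, ⟨devLE_mono le_rfl hcb hdev, fun β hβ hd => ?_⟩, fun d hd hdc => ?_⟩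
  · rcases hq c hc hcb with heq | ⟨γ, hγ, hγd⟩
    · exact hnd β hβ (heq ▸ hd)
    · exact hnd (β ⊔ γ) (sup_lt_iff.2 ⟨hβ, hγ⟩)
        (devLE_sup (β ⊔ γ) β γ rfl ⊥ c b bot_le hcb hd hγd)
  · rcases hq d hd (hdc.trans hcb) with heq | ⟨γ, hγ, hγd⟩
    · left
      exact le_antisymm hdc (by rw [heq]; exact hcb)
    · exact Or.inr ⟨γ, hγ, devLE_mono le_rfl hcb hγd⟩

theorem crit_uniform {α : Ordinal.{0}} {uu : L}
    (hcrit : IsCriticalInterval α ⊥ uu) :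
    ∀ A B : L, A ≤ uu → B ≤ uu → A ≠ ⊥ → B ≠ ⊥ → A ⊓ B ≠ ⊥ := by
  intro A B hAu hBu hA hB hAB
  obtain ⟨hu, ⟨hdev, hnd⟩, hq⟩ := hcrit
  rcases hq A (bot_lt_iff_ne_bot.2 hA) hAu with heqA | ⟨β, hβ, hβd⟩
  · refine hB (eq_bot_iff.2 ?_)
    have hBA : B ≤ A := heqA ▸ hBu
    rw [← hAB]
    exact le_inf hBA le_rfl
  rcases hq B (bot_lt_iff_ne_bot.2 hB) hBu with heqB | ⟨γ, hγ, hγd⟩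
  · refine hA (eq_bot_iff.2 ?_)
    have hABle : A ≤ B := heqB ▸ hAu
    rw [← hAB]
    exact le_inf le_rfl hABle
  -- transfer: DevLE β ⊥ B
  have hdevB : DevLE β (⊥ : L) B := by
    refine devLE_transfer β (fun x => A ⊔ x) (fun y => y ⊓ B)
      (fun _ _ h => sup_le_sup_left h A) (fun _ _ h => inf_le_inf_right B h)
      ⊥ B (fun x _ hx2 => ?_) ?_
    · show (A ⊔ x) ⊓ B = x
      rw [sup_comm A x, sup_inf_assoc_of_le A hx2, hAB, sup_bot_eq]
    · show DevLE β (A ⊔ ⊥) (A ⊔ B)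
      rw [sup_bot_eq]
      exact devLE_mono le_rfl (sup_le hAu hBu) hβd
  exact hnd (β ⊔ γ) (sup_lt_iff.2 ⟨hβ, hγ⟩)
    (devLE_sup (β ⊔ γ) β γ rfl ⊥ B uu bot_le hBu hdevB hγd)
end Critical

section Hull
variable {R : Type u} [Ring R]

/-- Two injective modules with isomorphic essential submodules are isomorphic. -/
theorem hull_iso {W E₁ E₂ : Type u} [AddCommGroup W] [Module R W]
    [AddCommGroup E₁] [Module R E₁] [AddCommGroup E₂] [Module R E₂]
    (hI₁ : Module.Injective R E₁) (hI₂ : Module.Injective R E₂)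
    (w₁ : W →ₗ[R] E₁) (w₂ : W →ₗ[R] E₂)
    (hw₁ : Function.Injective w₁) (hw₂ : Function.Injective w₂)
    (he₁ : ∀ K : Submodule R E₁, K ≠ ⊥ → K ⊓ LinearMap.range w₁ ≠ ⊥)
    (he₂ : ∀ K : Submodule R E₂, K ≠ ⊥ → K ⊓ LinearMap.range w₂ ≠ ⊥) :
    Nonempty (E₁ ≃ₗ[R] E₂) := by
  obtain ⟨g, hg⟩ := hI₁.out w₂ hw₂ w₁
  have hginj : Function.Injective g := by
    rw [← LinearMap.ker_eq_bot]
    by_contra hker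
    obtain ⟨z, hz, hz0⟩ := Submodule.exists_mem_ne_zero_of_ne_bot
      (he₂ (LinearMap.ker g) hker)
    obtain ⟨x, hx⟩ := hz.2
    have : w₁ x = 0 := by rw [← hg x, hx]; exact hz.1
    have hx0 : x = 0 := hw₁ (by rw [this, map_zero])
    exact hz0 (by rw [← hx, hx0, map_zero])
  obtain ⟨π, hπ⟩ := hI₂.out g hginj LinearMap.id
  have hπinj : Function.Injective π := by
    rw [← LinearMap.ker_eq_bot]
    by_contra hker
    obtain ⟨z, hz, hz0⟩ := Submodule.exists_mem_ne_zero_of_ne_bot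
      (he₁ (LinearMap.ker π) hker)
    obtain ⟨x, hx⟩ := hz.2
    have hzz : π z = 0 := hz.1
    have : w₂ x = 0 := by
      rw [← hx, ← hg x] at hzz
      simpa using (hπ (w₂ x)).symm.trans hzz
    have hx0 : x = 0 := hw₂ (by rw [this, map_zero])
    exact hz0 (by rw [← hx, hx0, map_zero])
  have hπsurj : Function.Surjective π := fun y => ⟨g y, by simpa using hπ y⟩
  exact ⟨LinearEquiv.ofBijective π ⟨hπinj, hπsurj⟩⟩

/-- A nontrivial indecomposable injective module is uniform. -/
theorem indec_uniform {E : Type u} [AddCommGroup E] [Module R E]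
    (hinj : Module.Injective R E)
    (hind : ∀ A B : Submodule R E, IsCompl A B → A = ⊥ ∨ B = ⊥) :
    ∀ A B : Submodule R E, A ≠ ⊥ → B ≠ ⊥ → A ⊓ B ≠ ⊥ := by
  intro A B hA hB hAB
  -- Zorn: C ⊇ A maximal with C ⊓ B = ⊥
  have hzorn : ∀ (A₀ B₀ : Submodule R E), A₀ ⊓ B₀ = ⊥ →
      ∃ C, A₀ ≤ C ∧ (A₀ ≤ C ∧ C ⊓ B₀ = ⊥) ∧
        ∀ C', (A₀ ≤ C' ∧ C' ⊓ B₀ = ⊥) → C ≤ C' → C' ≤ C := by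
    intro A₀ B₀ h0
    have := zorn_le_nonempty₀ {C : Submodule R E | A₀ ≤ C ∧ C ⊓ B₀ = ⊥} ?_ A₀ ⟨le_rfl, h0⟩
    · obtain ⟨C, hAC, hCmem, hCmax⟩ := this
      exact ⟨C, hAC, hCmem, fun C' h1 h2 => hCmax h1 h2⟩
    · intro c hc hchain y hy
      refine ⟨sSup c, ⟨(hc hy).1.trans (le_sSup hy), ?_⟩, fun z hz => le_sSup hz⟩
      rw [eq_bot_iff]
      intro x hx
      have hx1 : x ∈ sSup c := hx.1
      rw [Submodule.mem_sSup_of_directed ⟨y, hy⟩ (hchain.directedOn)] at hx1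
      obtain ⟨p, hp, hxp⟩ := hx1
      have : x ∈ p ⊓ B₀ := ⟨hxp, hx.2⟩
      rw [(hc hp).2] at this
      exact this
  obtain ⟨C, hAC, ⟨_, hCB⟩, hCmax⟩ := hzorn A B hAB
  -- D ⊇ B maximal with D ⊓ C = ⊥
  have hBC : B ⊓ C = ⊥ := by rw [inf_comm]; exact hCB
  obtain ⟨D, hBD, ⟨_, hDC⟩, hDmax⟩ := hzorn B C hBC
  have hCD : C ⊓ D = ⊥ := by rw [inf_comm]; exact hDC
  -- C is maximal among submodules disjoint from D
  have hCmax' : ∀ C', C ≤ C' → C' ⊓ D = ⊥ → C' = C := by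
    intro C' hCC' hC'D
    refine le_antisymm (hCmax C' ⟨hAC.trans hCC', ?_⟩ hCC') hCC'
    rw [eq_bot_iff, ← hC'D]
    exact inf_le_inf_left C' hBD
  have hDmax' : ∀ D', D ≤ D' → D' ⊓ C = ⊥ → D' = D := by
    intro D' hDD' hD'C
    exact le_antisymm (hDmax D' ⟨hBD.trans hDD', hD'C⟩ hDD') hDD'
  -- construct the projection π : E → E with π|C = id, π|D = 0
  have hjinj : Function.Injective (D.mkQ.comp C.subtype) := by
    rw [← LinearMap.ker_eq_bot, LinearMap.ker_eq_bot']
    intro m hm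
    have hm' : D.mkQ (m : E) = 0 := hm
    rw [Submodule.mkQ_apply, Submodule.Quotient.mk_eq_zero] at hm'
    have : (m : E) ∈ C ⊓ D := ⟨m.2, hm'⟩
    rw [hCD] at this
    exact Subtype.ext ((Submodule.mem_bot R).1 this)
  obtain ⟨τ, hτ⟩ := hinj.out (D.mkQ.comp C.subtype) hjinj C.subtype
  set π : E →ₗ[R] E := τ.comp D.mkQ with hπdef
  have hπC : ∀ x ∈ C, π x = x := by
    intro x hx
    have := hτ ⟨x, hx⟩
    simpa [hπdef] using this
  have hπD : ∀ x ∈ D, π x = 0 := by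
    intro x hx
    have hx' : D.mkQ x = 0 := by
      rw [Submodule.mkQ_apply, Submodule.Quotient.mk_eq_zero]
      exact hx
    simp [hπdef, LinearMap.comp_apply, hx']
  -- ker π = D
  have hkerD : LinearMap.ker π = D := by
    refine hDmax' _ (fun x hx => by simpa using hπD x hx) ?_
    rw [eq_bot_iff]
    intro x hx
    have : x = 0 := by rw [← hπC x hx.2]; exact hx.1
    simpa [this] using Submodule.zero_mem ⊥
  have hkerD2 : LinearMap.ker (π.comp π) = D := by
    refine hDmax' _ (fun x hx => ?_) ?_
    · have : π x = 0 := hπD x hx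
      simp [LinearMap.mem_ker, this]
    · rw [eq_bot_iff]
      intro x hx
      have h1 : π (π x) = 0 := hx.1
      have h2 : π (π x) = x := by rw [hπC x hx.2, hπC x hx.2]
      have : x = 0 := by rw [← h2, h1]
      simpa [this] using Submodule.zero_mem ⊥
  -- range π = C
  have hrD : LinearMap.range π ⊓ D = ⊥ := by
    rw [eq_bot_iff]
    intro x hx
    obtain ⟨y, hy⟩ := hx.1
    have h1 : π x = 0 := hπD x hx.2
    have h2 : y ∈ LinearMap.ker (π.comp π) := by
      simp only [LinearMap.mem_ker, LinearMap.comp_apply, hy, h1]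
    rw [hkerD2] at h2
    have : x = 0 := by rw [← hy, hπD y h2]
    simpa [this] using Submodule.zero_mem ⊥
  have hrC : LinearMap.range π = C := by
    refine hCmax' _ (fun x hx => ⟨x, hπC x hx⟩) hrD
  -- IsCompl C D
  have hcompl : IsCompl C D := by
    constructor
    · rw [disjoint_iff]; exact hCD
    · rw [codisjoint_iff, eq_top_iff]
      intro x _
      have hπx : π x ∈ C := hrC ▸ LinearMap.mem_range_self π x
      have hker : x - π x ∈ D := by
        rw [← hkerD]
        simp only [LinearMap.mem_ker, map_sub]
        rw [hπC (π x) hπx, sub_self]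
      have hmem := Submodule.add_mem_sup hπx hker
      rwa [add_sub_cancel] at hmem
  rcases hind C D hcompl with h | h
  · exact hA (eq_bot_iff.2 (h ▸ hAC))
  · exact hB (eq_bot_iff.2 (h ▸ hBD))
end Hull

section CritIdeal
variable {R : Type u} [Ring R] [IsNoetherianRing R]

/-- Every `α`-critical submodule of a module over a prime noetherian ring of Krull
dimension `α` yields a uniform left ideal embedding into the module. -/
theorem crit_ideal {E : Type u} [AddCommGroup E] [Module R E]
    (hprime : ∀ a b : R, (∀ r : R, a * r * b = 0) → a = 0 ∨ b = 0)
    {α : Ordinal.{0}} (hα1 : DevLE α (⊥ : Submodule R R) ⊤)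
    (U' : Submodule R E) (hcrit : IsCriticalInterval α ⊥ U') :
    ∃ (J : Submodule R R) (f : J →ₗ[R] E), IsUniformIdeal R J ∧ Function.Injective f := by
  obtain ⟨u, huU, hu⟩ := Submodule.exists_mem_ne_zero_of_ne_bot hcrit.1.ne'
  set ψ := LinearMap.toSpanSingleton R E u with hψ
  by_cases hessL : ∀ B : Submodule R R, B ≠ ⊥ → LinearMap.ker ψ ⊓ B ≠ ⊥
  · exfalso
    rcases kdim_quot hprime hα1 (LinearMap.ker ψ) hessL with htop | ⟨β, hβ, hdev⟩
    · have h1 : (1 : R) ∈ LinearMap.ker ψ := by rw [htop]; trivial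
      rw [LinearMap.mem_ker, hψ, LinearMap.toSpanSingleton_apply, one_smul] at h1
      exact hu h1
    · set C := LinearMap.range ψ with hC
      have hCU : C ≤ U' := by
        rintro x ⟨r, rfl⟩
        rw [hψ, LinearMap.toSpanSingleton_apply]
        exact U'.smul_mem r huU
      have huC : u ∈ C := ⟨1, by rw [hψ, LinearMap.toSpanSingleton_apply, one_smul]⟩
      have hCbot : ⊥ < C := bot_lt_iff_ne_bot.2 (fun h => hu (by
        rw [h, Submodule.mem_bot] at huC; exact huC))
      have hsub := crit_sub hcrit hCbot hCU
      refine hsub.2.1.2 β hβ ?_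
      refine devLE_transfer β (fun Y => Submodule.comap ψ Y) (fun X => Submodule.map ψ X)
        (fun _ _ h => Submodule.comap_mono h) (fun _ _ h => Submodule.map_mono h)
        ⊥ C (fun Y _ hY2 => ?_) ?_
      · show Submodule.map ψ (Submodule.comap ψ Y) = Y
        rw [Submodule.map_comap_eq, inf_eq_right.2 (hC ▸ hY2)]
      · show DevLE β (Submodule.comap ψ ⊥) (Submodule.comap ψ C)
        have h2 : Submodule.comap ψ C = ⊤ :=
          Submodule.eq_top_iff'.2 (fun x => LinearMap.mem_range_self ψ x)
        rw [Submodule.comap_bot, h2]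
        exact hdev
  · push_neg at hessL
    obtain ⟨J, hJbot, hJK⟩ := hessL
    have hψJ : ∀ x ∈ J, ψ x = 0 → x = 0 := by
      intro x hxJ hx
      have : x ∈ LinearMap.ker ψ ⊓ J := ⟨hx, hxJ⟩
      rw [hJK] at this
      exact (Submodule.mem_bot R).1 this
    refine ⟨J, ψ.domRestrict J, ⟨hJbot, ?_⟩, ?_⟩
    · intro A B hAJ hBJ hA hB hAB
      have hmapU : ∀ (X : Submodule R R), Submodule.map ψ X ≤ U' := by
        intro X
        rintro x ⟨r, _, rfl⟩
        rw [hψ, LinearMap.toSpanSingleton_apply]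
        exact U'.smul_mem r huU
      have hmapne : ∀ X : Submodule R R, X ≤ J → X ≠ ⊥ → Submodule.map ψ X ≠ ⊥ := by
        intro X hXJ hX h
        obtain ⟨x, hxX, hx0⟩ := Submodule.exists_mem_ne_zero_of_ne_bot hX
        have : ψ x ∈ Submodule.map ψ X := Submodule.mem_map_of_mem hxX
        rw [h, Submodule.mem_bot] at this
        exact hx0 (hψJ x (hXJ hxX) this)
      have hmeet := crit_uniform hcrit (Submodule.map ψ A) (Submodule.map ψ B)
        (hmapU A) (hmapU B) (hmapne A hAJ hA) (hmapne B hBJ hB)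
      refine hmeet ?_
      rw [eq_bot_iff]
      rintro z ⟨⟨a, haA, rfl⟩, ⟨b, hbB, hba⟩⟩
      have hab : a = b := by
        have h0 : ψ (b - a) = 0 := by rw [map_sub, hba, sub_self]
        have := hψJ (b - a) (Submodule.sub_mem J (hBJ hbB) (hAJ haA)) h0
        rw [sub_eq_zero] at this
        exact this.symm
      have : a ∈ A ⊓ B := ⟨haA, hab ▸ hbB⟩
      rw [hAB, Submodule.mem_bot] at this
      rw [this, map_zero]
      exact Submodule.zero_mem ⊥
    · rw [← LinearMap.ker_eq_bot, LinearMap.ker_eq_bot']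
      intro m hm
      have h0 : ψ (m : R) = 0 := by rwa [LinearMap.domRestrict_apply] at hm
      exact Subtype.ext (hψJ m m.2 h0)
end CritIdeal

section Assembly
variable {R : Type u} [Ring R]

theorem hull_ess_comp {E₁ : Type u} [AddCommGroup E₁] [Module R E₁]
    (U V : Submodule R R)
    (hUuni : ∀ A B : Submodule R R, A ≤ U → B ≤ U → A ≠ ⊥ → B ≠ ⊥ → A ⊓ B ≠ ⊥)
    (hV : V ≠ ⊥)
    (f₁ : U →ₗ[R] E₁) (hf₁ : Function.Injective f₁)
    (hf₁ess : ∀ K : Submodule R E₁, K ≠ ⊥ → K ⊓ LinearMap.range f₁ ≠ ⊥)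
    (e : V →ₗ[R] U) (he : Function.Injective e) :
    ∀ K : Submodule R E₁, K ≠ ⊥ → K ⊓ LinearMap.range (f₁.comp e) ≠ ⊥ := by
  intro K hK
  obtain ⟨y, hy, hy0⟩ := Submodule.exists_mem_ne_zero_of_ne_bot (hf₁ess K hK)
  obtain ⟨a, ha⟩ := hy.2
  set A' := Submodule.map U.subtype (Submodule.comap f₁ K) with hA'
  set B' := Submodule.map U.subtype (LinearMap.range e) with hB'
  have hA'ne : A' ≠ ⊥ := by
    have haK : a ∈ Submodule.comap f₁ K := by rw [Submodule.mem_comap, ha]; exact hy.1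
    have hmem : (a : R) ∈ A' := Submodule.mem_map_of_mem haK
    intro h
    rw [h, Submodule.mem_bot] at hmem
    have ha0 : a = 0 := by apply Subtype.ext; simpa using hmem
    exact hy0 (by rw [← ha, ha0, map_zero])
  have hB'ne : B' ≠ ⊥ := by
    obtain ⟨v, hvV, hv0⟩ := Submodule.exists_mem_ne_zero_of_ne_bot hV
    have hz : (e ⟨v, hvV⟩ : R) ∈ B' :=
      Submodule.mem_map_of_mem (LinearMap.mem_range_self e ⟨v, hvV⟩)
    intro h
    rw [h, Submodule.mem_bot] at hz
    have : e ⟨v, hvV⟩ = 0 := by apply Subtype.ext; simpa using hz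
    have : (⟨v, hvV⟩ : V) = 0 := he (by rw [this, map_zero])
    exact hv0 (by simpa using congrArg Subtype.val this)
  have hmeet := hUuni A' B' (Submodule.map_subtype_le _ _) (Submodule.map_subtype_le _ _)
    hA'ne hB'ne
  obtain ⟨z₀, hz₀, hz₀0⟩ := Submodule.exists_mem_ne_zero_of_ne_bot hmeet
  obtain ⟨a₁, ha₁K, ha₁⟩ := hz₀.1
  obtain ⟨b₁, hb₁r, hb₁⟩ := hz₀.2
  have hab : a₁ = b₁ := Subtype.coe_injective (ha₁.trans hb₁.symm)
  obtain ⟨w, hw⟩ := hb₁r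
  intro h
  have hmem : f₁ a₁ ∈ K ⊓ LinearMap.range (f₁.comp e) := by
    refine ⟨ha₁K, ⟨w, ?_⟩⟩
    rw [LinearMap.comp_apply, hw, ← hab]
  rw [h, Submodule.mem_bot] at hmem
  have : a₁ = 0 := hf₁ (by rw [hmem, map_zero])
  exact hz₀0 (by rw [← ha₁, this, map_zero])
end Assembly

section Assembly2
variable {R : Type u} [Ring R]

theorem range_ne_bot {E : Type u} [AddCommGroup E] [Module R E] (J : Submodule R R)
    (f : J →ₗ[R] E) (hJ : J ≠ ⊥) (hf : Function.Injective f) : LinearMap.range f ≠ ⊥ := by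
  obtain ⟨x, hxJ, hx0⟩ := Submodule.exists_mem_ne_zero_of_ne_bot hJ
  intro h
  have h1 : f ⟨x, hxJ⟩ ∈ (⊥ : Submodule R E) := h ▸ LinearMap.mem_range_self f _
  rw [Submodule.mem_bot] at h1
  have h2 : (⟨x, hxJ⟩ : J) = 0 := hf (by rw [h1, map_zero])
  exact hx0 (by simpa using congrArg Subtype.val h2)
end Assembly2


/-- Let `R` be a prime noetherian ring of Krull dimension `α`.  Then (1) any two uniform
ideals of `R` are subisomorphic; (2) consequently any two critical ideals of maximal
Krull dimension `α` have isomorphic injective hulls; (3) hence `Mod R` has, up to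
isomorphism, a unique indecomposable injective module of critical dimension `α`. -/
theorem prime_noetherian_unique_indecomposable_injective
    {R : Type u} [Ring R] [IsNoetherianRing R]
    (hprime : ∀ a b : R, (∀ r : R, a * r * b = 0) → a = 0 ∨ b = 0)
    {α : Ordinal.{0}} (hα : Module.IsKdim R R α) :
    (∀ U V : Submodule R R, IsUniformIdeal R U → IsUniformIdeal R V →
        (∃ f : U →ₗ[R] V, Function.Injective f) ∧
        (∃ g : V →ₗ[R] U, Function.Injective g)) ∧
    (∀ U V : Submodule R R,
        IsCriticalInterval α (⊥ : Submodule R R) U →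
        IsCriticalInterval α (⊥ : Submodule R R) V →
        ∀ (E₁ E₂ : Type u) [AddCommGroup E₁] [Module R E₁] [AddCommGroup E₂] [Module R E₂],
          IsInjectiveHull R U E₁ → IsInjectiveHull R V E₂ → Nonempty (E₁ ≃ₗ[R] E₂)) ∧
    (∀ (E₁ E₂ : Type u) [AddCommGroup E₁] [Module R E₁] [AddCommGroup E₂] [Module R E₂],
        Module.Injective R E₁ → Module.Injective R E₂ →
        (∀ A B : Submodule R E₁, IsCompl A B → A = ⊥ ∨ B = ⊥) →
        (∀ A B : Submodule R E₂, IsCompl A B → A = ⊥ ∨ B = ⊥) →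
        (∃ U : Submodule R E₁, IsCriticalInterval α (⊥ : Submodule R E₁) U) →
        (∃ V : Submodule R E₂, IsCriticalInterval α (⊥ : Submodule R E₂) V) →
        Nontrivial E₁ → Nontrivial E₂ →
        Nonempty (E₁ ≃ₗ[R] E₂)) := by
  have hα' : IsDev α (⊥ : Submodule R R) ⊤ := hα
  refine ⟨?_, ?_, ?_⟩
  · intro U V hU hV
    exact ⟨uniform_embeds hprime V U hV.1 hU, uniform_embeds hprime U V hU.1 hV⟩
  · intro U V hcU hcV E₁ E₂ _ _ _ _ hH1 hH2
    obtain ⟨hI₁, f₁, hf₁, hf₁ess⟩ := hH1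
    obtain ⟨hI₂, f₂, hf₂, hf₂ess⟩ := hH2
    have hUuni := crit_uniform hcU
    have hVuni := crit_uniform hcV
    obtain ⟨e, he⟩ := uniform_embeds hprime U V hcU.1.ne' ⟨hcV.1.ne', hVuni⟩
    have hw₁ : Function.Injective (f₁.comp e) := by
      rw [LinearMap.coe_comp]; exact hf₁.comp he
    exact hull_iso hI₁ hI₂ (f₁.comp e) f₂ hw₁ hf₂
      (hull_ess_comp U V hUuni hcV.1.ne' f₁ hf₁ hf₁ess e he) hf₂ess
  · intro E₁ E₂ _ _ _ _ hI₁ hI₂ hind₁ hind₂ hU₁ hU₂ _ _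
    obtain ⟨U₁, hcU₁⟩ := hU₁
    obtain ⟨U₂, hcU₂⟩ := hU₂
    obtain ⟨J₁, g₁, hJ₁, hg₁⟩ := crit_ideal hprime hα'.1 U₁ hcU₁
    obtain ⟨J₂, g₂, hJ₂, hg₂⟩ := crit_ideal hprime hα'.1 U₂ hcU₂
    obtain ⟨e, he⟩ := uniform_embeds hprime J₁ J₂ hJ₁.1 hJ₂
    have huni₁ := indec_uniform hI₁ hind₁
    have huni₂ := indec_uniform hI₂ hind₂
    have hw₁ : Function.Injective (g₁.comp e) := by
      rw [LinearMap.coe_comp]; exact hg₁.comp he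
    have he₁ : ∀ K : Submodule R E₁, K ≠ ⊥ → K ⊓ LinearMap.range (g₁.comp e) ≠ ⊥ := by
      intro K hK
      exact huni₁ K _ hK (range_ne_bot J₂ (g₁.comp e) hJ₂.1 hw₁)
    have he₂ : ∀ K : Submodule R E₂, K ≠ ⊥ → K ⊓ LinearMap.range g₂ ≠ ⊥ := by
      intro K hK
      exact huni₂ K _ hK (range_ne_bot J₂ g₂ hJ₂.1 hg₂)
    exact hull_iso hI₁ hI₂ (g₁.comp e) g₂ hw₁ hg₂ he₁ he₂
end
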